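/- Unimodular and counimodular case: if ε ∘ σ = ε and φ(S(a)) = φ(a) for all a ∈ A (so that the modular elements δ and δ̂ are both trivial), then S⁴ = id, i.e. S⁴(a) = a for every a ∈ A. -/

import Mathlib

/-!
Strong left invariance of a left integral `φ`, `S ((id ⊗ φ) (Δ b (1 ⊗ c))) = (id ⊗ φ) ((1 ⊗ b) Δ c)`,
applied twice and combined with `φ (a b) = φ (b σ a)`, shows that `Δ (σ b)` and `∑ S² b₁ ⊗ σ b₂`
have the same pairing with every functional `φ (a • -)` on the second factor. These functionals
separate points by faithfulness, so `Δ ∘ σ = (S² ⊗ σ) ∘ Δ`, and `ε ∘ σ = ε` then gives `σ = S²`.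
Finally `φ ∘ S = φ` and `S (x y) = S y S x` give
`φ (x y) = φ (S y S x) = φ (S x S³ y) = φ (S² y x) = φ (x S⁴ y)`, so `S⁴ = id` by faithfulness.
-/

open TensorProduct HopfAlgebra Coalgebra

theorem TensorProduct.eq_of_forall_rid_lTensor_eq {R M N ι : Type*} [CommRing R]
    [AddCommGroup M] [Module R M] [Module.Free R M] [AddCommGroup N] [Module R N]
    (f : ι → N →ₗ[R] R) (hf : ∀ n, (∀ i, f i n = 0) → n = 0) {t u : M ⊗[R] N}
    (h : ∀ i, TensorProduct.rid R M ((f i).lTensor M t) =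
      TensorProduct.rid R M ((f i).lTensor M u)) :
    t = u := by
  classical
  let B := Module.Free.chooseBasis R M
  rw [← sub_eq_zero]
  refine (equivFinsuppOfBasisLeft B).map_eq_zero_iff.mp (Finsupp.ext fun j => hf _ fun i => ?_)
  have coeff_eq (s : M ⊗[R] N) : f i (equivFinsuppOfBasisLeft B s j) =
      B.coord j (TensorProduct.rid R M ((f i).lTensor M s)) := by
    induction s using TensorProduct.induction_on with
    | zero => simp
    | tmul x y => simp [mul_comm]
    | add s s' hs hs' => simp [hs, hs']
  simp [coeff_eq, h]

section Slice

variable {R A : Type*} [CommSemiring R] [Semiring A] [Algebra R A]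

noncomputable def slice (φ : A →ₗ[R] R) : A ⊗[R] A →ₗ[R] A :=
  (TensorProduct.rid R A).toLinearMap ∘ₗ φ.lTensor A

variable (φ : A →ₗ[R] R)

@[simp]
lemma slice_tmul (x y : A) : slice φ (x ⊗ₜ y) = φ y • x := by
  simp [slice]

lemma slice_tmul_one_mul (x : A) (t : A ⊗[R] A) :
    slice φ ((x ⊗ₜ 1) * t) = x * slice φ t := by
  induction t using TensorProduct.induction_on with
  | zero => simp
  | tmul y z => simp [Algebra.TensorProduct.tmul_mul_tmul]
  | add t t' ht ht' => simp [mul_add, ht, ht']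

lemma slice_one_tmul_mul (b : A) (t : A ⊗[R] A) :
    slice φ ((1 ⊗ₜ b) * t) = slice (φ ∘ₗ LinearMap.mulLeft R b) t := by
  induction t using TensorProduct.induction_on with
  | zero => simp
  | tmul y z => simp [Algebra.TensorProduct.tmul_mul_tmul]
  | add t t' ht ht' => simp [mul_add, ht, ht']

end Slice

section HopfAlgebra

variable {R A ι : Type*} [CommSemiring R] [Semiring A] [HopfAlgebra R A]

def IsLeftIntegral (φ : A →ₗ[R] R) : Prop :=
  ∀ a, slice φ (comul a) = φ a • 1

lemma sum_antipode_tmul_one_mul_comul {b : A} (r : Repr R b ι) :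
    ∑ i ∈ r.index, (antipode R (r.left i) ⊗ₜ[R] (1 : A)) * comul (r.right i) = 1 ⊗ₜ b := by
  let F : A ⊗[R] (A ⊗[R] A) →ₗ[R] A ⊗[R] A :=
    TensorProduct.lift (LinearMap.mul R (A ⊗[R] A) ∘ₗ
      Algebra.TensorProduct.includeLeft.toLinearMap ∘ₗ antipode R)
  have hF (x y z : A) : F (x ⊗ₜ (y ⊗ₜ z)) = (antipode R x * y) ⊗ₜ z := by
    simp [F, Algebra.TensorProduct.tmul_mul_tmul]
  calc _ = F (comul.lTensor A (comul b)) := by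
        simp [F, ← r.eq, map_sum]
    _ = ∑ i ∈ r.index, (∑ j ∈ (ℛ R (r.left i)).index,
          antipode R ((ℛ R (r.left i)).left j) * (ℛ R (r.left i)).right j) ⊗ₜ r.right i := by
        rw [← coassoc_apply, ← r.eq]
        simp [map_sum, ← (ℛ R (r.left _)).eq, TensorProduct.sum_tmul, hF]
    _ = 1 ⊗ₜ b := by
        simp only [sum_antipode_mul_eq_smul, TensorProduct.smul_tmul, ← TensorProduct.tmul_sum,
          sum_counit_smul]

variable {φ : A →ₗ[R] R}

lemma IsLeftIntegral.slice_comul_mul_comul (hφ : IsLeftIntegral φ) (a b : A) :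
    slice φ (comul a * comul b) = φ (a * b) • 1 := by
  rw [← Bialgebra.comul_mul, hφ]

theorem IsLeftIntegral.sum_smul_antipode_eq_slice {b : A} (hφ : IsLeftIntegral φ)
    (r : Repr R b ι) (c : A) :
    ∑ i ∈ r.index, φ (r.right i * c) • antipode R (r.left i) =
      slice (φ ∘ₗ LinearMap.mulLeft R b) (comul c) :=
  calc _ = ∑ i ∈ r.index, antipode R (r.left i) * slice φ (comul (r.right i) * comul c) := by
        simp [hφ.slice_comul_mul_comul]
    _ = slice φ ((∑ i ∈ r.index, (antipode R (r.left i) ⊗ₜ[R] (1 : A)) * comul (r.right i)) *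
          comul c) := by
        simp [Finset.sum_mul, map_sum, mul_assoc, slice_tmul_one_mul]
    _ = _ := by rw [sum_antipode_tmul_one_mul_comul, slice_one_tmul_mul]

theorem IsLeftIntegral.slice_comul_of_modular {σ : A → A} (hφ : IsLeftIntegral φ)
    (hσ : ∀ a b, φ (a * b) = φ (b * σ a)) {b : A} (r : Repr R b ι) (a : A) :
    slice (φ ∘ₗ LinearMap.mulLeft R a) (comul (σ b)) =
      ∑ i ∈ r.index, φ (a * σ (r.right i)) • antipode R (antipode R (r.left i)) := by
  let ra := ℛ R a
  calc _ = ∑ j ∈ ra.index, φ (ra.right j * σ b) • antipode R (ra.left j) :=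
        (hφ.sum_smul_antipode_eq_slice ra (σ b)).symm
    _ = antipode R (slice (φ ∘ₗ LinearMap.mulLeft R b) (comul a)) := by
        simp [← ra.eq, map_sum, hσ b]
    _ = _ := by
        simp [← hφ.sum_smul_antipode_eq_slice r a, map_sum, hσ _ a]

end HopfAlgebra

section Field

variable {K A : Type*} [Field K] [Ring A] [HopfAlgebra K A] {φ : A →ₗ[K] K} {σ : A → A}

theorem IsLeftIntegral.comul_of_modular (hφ : IsLeftIntegral φ)
    (hφf : ∀ a : A, (∀ b : A, φ (b * a) = 0) → a = 0)
    (hσ : ∀ a b, φ (a * b) = φ (b * σ a)) {b : A} {ι : Type*} (r : Repr K b ι) :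
    comul (R := K) (σ b) = ∑ i ∈ r.index, antipode K (antipode K (r.left i)) ⊗ₜ σ (r.right i) :=
  TensorProduct.eq_of_forall_rid_lTensor_eq (fun a => φ ∘ₗ LinearMap.mulLeft K a)
    (fun n hn => hφf n hn) fun a => by
      simpa [map_sum, slice] using hφ.slice_comul_of_modular hσ r a

theorem IsLeftIntegral.eq_antipode_antipode_of_modular (hφ : IsLeftIntegral φ)
    (hφf : ∀ a : A, (∀ b : A, φ (b * a) = 0) → a = 0)
    (hσ : ∀ a b, φ (a * b) = φ (b * σ a)) (hε : ∀ a, counit (R := K) (σ a) = counit a) (b : A) :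
    σ b = antipode K (antipode K b) := by
  have h := congr(counit.lTensor A $(hφ.comul_of_modular hφf hσ (ℛ K b)))
  simp only [lTensor_counit_comul, map_sum, LinearMap.lTensor_tmul, hε] at h
  have := sum_map_tmul_counit_eq (antipode K ∘ₗ antipode K) b (repr := ℛ K b)
  simpa using congr(TensorProduct.rid K A $(h.trans this))

end Field

theorem antipode_antipode_antipode_antipode_of_modular {R A : Type*} [CommRing R] [Ring A]
    [HopfAlgebra R A] {φ : A →ₗ[R] R} {σ : A → A}
    (hφf : ∀ a : A, (∀ b : A, φ (b * a) = 0) → a = 0)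
    (hσ : ∀ a b, φ (a * b) = φ (b * σ a)) (hσS : ∀ a, σ a = antipode R (antipode R a))
    (hφS : ∀ a, φ (antipode R a) = φ a) (a : A) :
    antipode R (antipode R (antipode R (antipode R a))) = a := by
  have key (x y : A) :
      φ (x * y) = φ (x * antipode R (antipode R (antipode R (antipode R y)))) :=
    calc φ (x * y) = φ (antipode R y * antipode R x) := by
          rw [← hφS, antipode_mul_antidistrib]
      _ = φ (antipode R (antipode R (antipode R y) * x)) := by
          rw [hσ, hσS, antipode_mul_antidistrib]
      _ = _ := by rw [hφS, hσ, hσS]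
  exact sub_eq_zero.mp (hφf _ fun x => by rw [mul_sub, map_sub, ← key, sub_self])

theorem unimodular_counimodular_S4_eq_id_general
    {A : Type*} [Ring A] [HopfAlgebra ℂ A]
    (φ : A →ₗ[ℂ] ℂ)
    (hφL : ∀ a : A,
      (TensorProduct.rid ℂ A) (LinearMap.lTensor A φ (Coalgebra.comul a)) = φ a • (1 : A))
    (hφf2 : ∀ a : A, (∀ b : A, φ (b * a) = 0) → a = 0)
    (σ : A ≃ₐ[ℂ] A) (hσ : ∀ a b : A, φ (a * b) = φ (b * σ a))
    (hcounimod : ∀ a : A, Coalgebra.counit (R := ℂ) (σ a) = Coalgebra.counit (R := ℂ) a)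
    (hunimod : ∀ a : A, φ (antipode (R := ℂ) a) = φ a) :
    ∀ a : A,
      antipode (R := ℂ) (antipode (R := ℂ) (antipode (R := ℂ) (antipode (R := ℂ) a))) = a :=
  have hφ : IsLeftIntegral φ := hφL
  antipode_antipode_antipode_antipode_of_modular hφf2 hσ
    (hφ.eq_antipode_antipode_of_modular hφf2 hσ hcounimod) hunimod

/-- Unimodular and counimodular case: if `ε ∘ σ = ε` and `φ ∘ S = φ`, then `S⁴ = id`. -/
theorem unimodular_counimodular_S4_eq_id
    {A : Type*} [Ring A] [HopfAlgebra ℂ A]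
    (hS : Function.Bijective (antipode (R := ℂ) (A := A)))
    (φ : A →ₗ[ℂ] ℂ) (hφ0 : φ ≠ 0)
    (hφL : ∀ a : A,
      (TensorProduct.rid ℂ A) (LinearMap.lTensor A φ (Coalgebra.comul a)) = φ a • (1 : A))
    (hφf1 : ∀ a : A, (∀ b : A, φ (a * b) = 0) → a = 0)
    (hφf2 : ∀ a : A, (∀ b : A, φ (b * a) = 0) → a = 0)
    (σ : A ≃ₐ[ℂ] A) (hσ : ∀ a b : A, φ (a * b) = φ (b * σ a))
    (hcounimod : ∀ a : A, Coalgebra.counit (R := ℂ) (σ a) = Coalgebra.counit (R := ℂ) a)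
    (hunimod : ∀ a : A, φ (antipode (R := ℂ) a) = φ a) :
    ∀ a : A,
      antipode (R := ℂ) (antipode (R := ℂ) (antipode (R := ℂ) (antipode (R := ℂ) a))) = a :=
  unimodular_counimodular_S4_eq_id_general φ hφL hφf2 σ hσ hcounimod hunimod
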